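/- For every pure Nash equilibrium b of a GSP position game satisfying the no-over assumption, the liquid price of anarchy and stability of GSP, VCG, and EGFP all equal exactly 2: the supremum over games of OPT/LW at the worst (and best) pure equilibrium is 2. -/

import Mathlib

/-! General position games with `n` players and `n` positions.
`α j` is the CTR of position `j`, `v i` and `c i` are the value and budget of player
`i`, an assignment is a permutation `σ` sending each player to her position, and
`σ.symm j` is the player occupying position `j`. -/

/-- A ranking `σ` is consistent with scalar bids `b` if players in earlier positions
bid at least as much (non-increasing bid order). -/
def RankConsistent {n : ℕ} (b : Fin n → ℝ) (σ : Equiv.Perm (Fin n)) : Prop :=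
  ∀ i j : Fin n, σ i < σ j → b j ≤ b i

/-- The bid of the player ranked just below player `i` (zero for the last position). -/
noncomputable def nextBid {n : ℕ} (b : Fin n → ℝ) (σ : Equiv.Perm (Fin n)) (i : Fin n) : ℝ :=
  if h : (σ i : ℕ) + 1 < n then b (σ.symm ⟨(σ i : ℕ) + 1, h⟩) else 0

/-- GSP utility: player `i` gets CTR of her position times her value, and pays the
next highest bid per click. -/
noncomputable def gspUtil {n : ℕ} (α v : Fin n → ℝ) (b : Fin n → ℝ)
    (σ : Equiv.Perm (Fin n)) (i : Fin n) : ℝ :=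
  α (σ i) * v i - α (σ i) * nextBid b σ i

/-- The no-over assumption for a bid `y` of player `i` occupying position `p`:
CTR times bid is at most the minimum of the player's total value and her budget. -/
def NoOverAt {n : ℕ} (α v c : Fin n → ℝ) (i p : Fin n) (y : ℝ) : Prop :=
  α p * y ≤ min (α p * v i) (c i)

/-- Pure Nash equilibrium of the GSP position game under the no-over assumption:
bids are non-negative, `σ` ranks the players by bids, everyone satisfies no-over, and
no player can improve her utility by a unilateral no-over deviation, whatever
consistent ranking results. -/
def GspEquilibrium {n : ℕ} (α v c : Fin n → ℝ) (b : Fin n → ℝ)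
    (σ : Equiv.Perm (Fin n)) : Prop :=
  (∀ i, 0 ≤ b i) ∧ RankConsistent b σ ∧ (∀ i, NoOverAt α v c i (σ i) (b i)) ∧
    ∀ (i : Fin n) (y : ℝ) (τ : Equiv.Perm (Fin n)), 0 ≤ y →
      RankConsistent (Function.update b i y) τ → NoOverAt α v c i (τ i) y →
        gspUtil α v (Function.update b i y) τ i ≤ gspUtil α v b σ i

/-- Total VCG payment of player `i`: the externality `∑_{k > σ i} b_{π(k)} (α_{k-1} - α_k)`. -/
noncomputable def vcgPay {n : ℕ} (α : Fin n → ℝ) (b : Fin n → ℝ)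
    (σ : Equiv.Perm (Fin n)) (i : Fin n) : ℝ :=
  ∑ k ∈ Finset.univ.filter (fun k : Fin n => σ i < k),
    b (σ.symm k) * (α ⟨(k : ℕ) - 1, lt_of_le_of_lt (Nat.sub_le _ _) k.isLt⟩ - α k)

/-- VCG utility of player `i`. -/
noncomputable def vcgUtil {n : ℕ} (α v : Fin n → ℝ) (b : Fin n → ℝ)
    (σ : Equiv.Perm (Fin n)) (i : Fin n) : ℝ :=
  α (σ i) * v i - vcgPay α b σ i

/-- Pure Nash equilibrium of the VCG position game under the no-over assumption. -/
def VcgEquilibrium {n : ℕ} (α v c : Fin n → ℝ) (b : Fin n → ℝ)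
    (σ : Equiv.Perm (Fin n)) : Prop :=
  (∀ i, 0 ≤ b i) ∧ RankConsistent b σ ∧ (∀ i, NoOverAt α v c i (σ i) (b i)) ∧
    ∀ (i : Fin n) (y : ℝ) (τ : Equiv.Perm (Fin n)), 0 ≤ y →
      RankConsistent (Function.update b i y) τ → NoOverAt α v c i (τ i) y →
        vcgUtil α v (Function.update b i y) τ i ≤ vcgUtil α v b σ i

/-- EGFP consistency: positions are allocated sequentially, so the player winning
position `p` bids at least as much for `p` as every player allocated at `p` or later. -/
def EgfpConsistent {n : ℕ} (b : Fin n → Fin n → ℝ) (σ : Equiv.Perm (Fin n)) : Prop :=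
  ∀ (p i : Fin n), p ≤ σ i → b i p ≤ b (σ.symm p) p

/-- EGFP utility: first-price payments, each winner pays her own bid for her position. -/
noncomputable def egfpUtil {n : ℕ} (α v : Fin n → ℝ) (b : Fin n → Fin n → ℝ)
    (σ : Equiv.Perm (Fin n)) (i : Fin n) : ℝ :=
  α (σ i) * v i - b i (σ i)

/-- Pure Nash equilibrium of the EGFP position game, with payments within budgets. -/
def EgfpEquilibrium {n : ℕ} (α v c : Fin n → ℝ) (b : Fin n → Fin n → ℝ)
    (σ : Equiv.Perm (Fin n)) : Prop :=
  (∀ i p, 0 ≤ b i p) ∧ EgfpConsistent b σ ∧ (∀ i, b i (σ i) ≤ c i) ∧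
    ∀ (i : Fin n) (y : Fin n → ℝ) (τ : Equiv.Perm (Fin n)), (∀ p, 0 ≤ y p) →
      EgfpConsistent (Function.update b i y) τ → y (τ i) ≤ c i →
        egfpUtil α v (Function.update b i y) τ i ≤ egfpUtil α v b σ i

/-- Liquid welfare of the assignment `σ`: each player's value is capped by her budget. -/
noncomputable def liquidWelfare {n : ℕ} (α v c : Fin n → ℝ) (σ : Equiv.Perm (Fin n)) : ℝ :=
  ∑ i, min (α (σ i) * v i) (c i)

/-!
Upper bound. Let `σ` be an equilibrium and `o` any assignment, and let `o` send player `i` to the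
position `p` that `σ` gives to `j`. If `σ i ≤ p`, the liquid value of `i` can only drop, as CTRs
decrease. Otherwise `i` can take `p` by matching the bid of `j` for it, at a total price `P` that
is bounded by the liquid value of `j`: by the no-over condition of `j` for GSP and VCG, and by
budget-feasibility and individual rationality for EGFP. Either `P` exceeds the liquid value of `i`
at `p`, or `i` can afford the deviation and the equilibrium condition gives
`α p * v i ≤ α (σ i) * v i + P`. Either way the liquid value of `i` in `o` is at most that of `i`
plus that of `j` in `σ`, and summing over `i` gives `LW o ≤ 2 * LW σ`.

Lower bound. With CTRs `(1, 1/λ)`, values `(λ, 1)` and unit budgets, every equilibrium gives the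
first position to the high-value player: otherwise she takes it by matching her opponent's bid,
which is at most `1`, and gains at least `λ - 2 > 0`. So the equilibrium liquid welfare is
`1 + 1/λ`, against `2` for the swapped assignment.
-/

open Finset Function Equiv

section

variable {n : ℕ}

/-- `price p` is the total payment of a player who takes position `p` by a unilateral deviation. -/
structure DeviationPrices (α v c : Fin n → ℝ) (σ : Perm (Fin n))
    (price : Fin n → ℝ) : Prop where
  nonneg : ∀ p, 0 ≤ price p
  le_occupant : ∀ p, price p ≤ min (α p * v (σ.symm p)) (c (σ.symm p))
  deviation : ∀ i p, p < σ i → price p ≤ min (α p * v i) (c i) →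
    α p * v i ≤ α (σ i) * v i + price p

lemma min_le_min_add_of_deviation {a a' c P L : ℝ} (hP : 0 ≤ P) (hPL : P ≤ L)
    (ha' : 0 ≤ min a' c) (h : P ≤ min a c → a ≤ a' + P) : min a c ≤ min a' c + L := by
  by_cases hPa : P ≤ min a c
  · calc min a c ≤ min (a' + P) (c + P) :=
          le_min ((min_le_left _ _).trans (h hPa)) ((min_le_right _ _).trans (by linarith))
      _ = min a' c + P := min_add_add_right _ _ _
      _ ≤ min a' c + L := by linarith
  · linarith [not_le.1 hPa]

theorem DeviationPrices.liquidWelfare_le_two_mul {α v c : Fin n → ℝ}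
    {σ : Perm (Fin n)} {price : Fin n → ℝ} (h : DeviationPrices α v c σ price)
    (hα : Antitone α) (hα0 : ∀ j, 0 ≤ α j) (hv : ∀ i, 0 ≤ v i) (hc : ∀ i, 0 ≤ c i)
    (o : Perm (Fin n)) : liquidWelfare α v c o ≤ 2 * liquidWelfare α v c σ := by
  set w : Fin n → ℝ := fun k => min (α (σ k) * v k) (c k)
  have key : ∀ i, min (α (o i) * v i) (c i) ≤ w i + w (σ.symm (o i)) := by
    intro i
    simp only [w, apply_symm_apply]
    refine min_le_min_add_of_deviation (h.nonneg _) (h.le_occupant _)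
      (le_min (mul_nonneg (hα0 _) (hv i)) (hc i)) fun hP => ?_
    rcases lt_or_ge (o i) (σ i) with hlt | hge
    · exact h.deviation i _ hlt hP
    · linarith [mul_le_mul_of_nonneg_right (hα hge) (hv i), h.nonneg (o i)]
  calc liquidWelfare α v c o ≤ ∑ i, (w i + w (σ.symm (o i))) := sum_le_sum fun i _ => key i
    _ = 2 * liquidWelfare α v c σ := by
      have hre : ∑ i, w (σ.symm (o i)) = ∑ i, w i := Equiv.sum_comp (o.trans σ.symm) w
      rw [sum_add_distrib, hre, liquidWelfare]; ring

theorem egfpConsistent_iff_rankConsistent {b : Fin n → ℝ} {σ : Perm (Fin n)} :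
    EgfpConsistent (fun k _ => b k) σ ↔ RankConsistent b σ := by
  refine ⟨fun h i j hij => by simpa using h (σ i) j hij.le, fun h q k hqk => ?_⟩
  rcases hqk.lt_or_eq with hlt | rfl
  · exact h _ _ (by rwa [apply_symm_apply])
  · simp

theorem exists_egfpConsistent_extending (B : Fin n → Fin n → ℝ) (τ₀ : Perm (Fin n))
    (m : ℕ) (h₀ : ∀ q : Fin n, (q : ℕ) < m → ∀ k, q ≤ τ₀ k → B k q ≤ B (τ₀.symm q) q) :
    ∃ τ : Perm (Fin n), EgfpConsistent B τ ∧
      ∀ q : Fin n, (q : ℕ) < m → τ.symm q = τ₀.symm q := by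
  classical
  -- A lexicographically largest vector of winning bids is consistent: an inconsistency at a
  -- free position is removed by a swap that increases the vector.
  set S := univ.filter fun τ : Perm (Fin n) => ∀ q : Fin n, (q : ℕ) < m → τ.symm q = τ₀.symm q
  obtain ⟨τ, hτS, hmax⟩ :=
    S.exists_max_image (fun τ => toLex fun q => B (τ.symm q) q) ⟨τ₀, by simp [S]⟩
  have hfix := (mem_filter.1 hτS).2
  refine ⟨τ, fun q k hqk => ?_, hfix⟩
  by_cases hq : (q : ℕ) < m
  · have hqk₀ : q ≤ τ₀ k := by
      by_contra! hlt
      have := hfix (τ₀ k) (lt_trans hlt hq)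
      rw [symm_apply_apply, symm_apply_eq] at this
      exact absurd hqk (not_le.2 (this ▸ hlt))
    rw [hfix q hq]
    exact h₀ q hq k hqk₀
  · by_contra! hlt
    have hqk' : q < τ k := hqk.lt_of_ne (by rintro rfl; simp at hlt)
    set τ' := τ.trans (swap q (τ k))
    have hsymm : ∀ r < q, τ'.symm r = τ.symm r := fun r hr => by
      simp [τ', swap_apply_of_ne_of_ne hr.ne (hr.trans hqk').ne]
    have hτ'S : τ' ∈ S := by
      simp only [S, mem_filter, mem_univ, true_and]
      exact fun r hr => (hsymm r (by omega)).trans (hfix r hr)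
    have hle := Pi.apply_le_of_toLex (hmax τ' hτ'S) fun r hr => congrArg (B · r) (hsymm r hr)
    simp only [τ', symm_trans_apply, symm_swap, swap_apply_left, symm_apply_apply] at hle
    exact not_le.2 hlt hle

theorem exists_egfpConsistent (B : Fin n → Fin n → ℝ) :
    ∃ τ : Perm (Fin n), EgfpConsistent B τ :=
  (exists_egfpConsistent_extending B 1 0 fun _ h => absurd h (Nat.not_lt_zero _)).imp
    fun _ h => h.1

theorem EgfpConsistent.exists_update_of_lt {b : Fin n → Fin n → ℝ} {σ : Perm (Fin n)}
    (h : EgfpConsistent b σ) {i p : Fin n} (hp : p < σ i) {y : Fin n → ℝ}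
    (hy_lt : ∀ q < p, y q ≤ b (σ.symm q) q) (hy_p : ∀ k, p ≤ σ k → b k p ≤ y p) :
    ∃ τ : Perm (Fin n), EgfpConsistent (update b i y) τ ∧ τ i = p := by
  set τ₀ := σ.trans (swap p (σ i))
  have hτ₀ : ∀ k ≠ i, ∀ q ≤ p, q ≤ τ₀ k → q ≤ σ k := by
    intro k hk q hqp hq
    by_cases hkp : σ k = p
    · exact hkp ▸ hqp
    · rwa [trans_apply, swap_apply_of_ne_of_ne hkp (σ.injective.ne hk)] at hq
  obtain ⟨τ, hτ, hfix⟩ := exists_egfpConsistent_extending (update b i y) τ₀ (p + 1) <| by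
    intro q hq k hk
    rcases (show q ≤ p from Nat.lt_succ_iff.1 hq).lt_or_eq with hqp | rfl
    · have hwin : τ₀.symm q = σ.symm q := by
        simp [τ₀, swap_apply_of_ne_of_ne hqp.ne (hqp.trans hp).ne]
      have hwin_ne : σ.symm q ≠ i := by
        rintro rfl; simp at hp; exact absurd (hqp.trans hp) (lt_irrefl _)
      rw [hwin, update_of_ne hwin_ne]
      by_cases hki : k = i
      · subst hki; simpa using hy_lt q hqp
      · rw [update_of_ne hki]; exact h q k (hτ₀ k hki q hqp.le hk)
    · have hwin : τ₀.symm q = i := by simp [τ₀]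
      rw [hwin, update_self]
      by_cases hki : k = i
      · subst hki; simp
      · rw [update_of_ne hki]; exact hy_p k (hτ₀ k hki q le_rfl hk)
  have hτp : τ.symm p = i := (hfix p (Nat.lt_succ_self _)).trans (by simp [τ₀])
  exact ⟨τ, hτ, ((symm_apply_eq _).1 hτp).symm⟩

theorem RankConsistent.exists_update_of_lt {b : Fin n → ℝ} {σ : Perm (Fin n)}
    (h : RankConsistent b σ) {i p : Fin n} (hp : p < σ i) :
    ∃ τ : Perm (Fin n), RankConsistent (update b i (b (σ.symm p))) τ ∧ τ i = p := by
  have h' := egfpConsistent_iff_rankConsistent.2 h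
  obtain ⟨τ, hτ, hτi⟩ := h'.exists_update_of_lt hp (y := fun _ => b (σ.symm p))
    (fun q hq => h' q _ (by rw [apply_symm_apply]; exact hq.le)) (fun k hk => h' p k hk)
  refine ⟨τ, egfpConsistent_iff_rankConsistent.1 ?_, hτi⟩
  convert hτ using 1
  funext k q
  by_cases hk : k = i <;> simp [hk]

lemma nextBid_nonneg {b : Fin n → ℝ} (hb : ∀ k, 0 ≤ b k) (σ : Perm (Fin n))
    (i : Fin n) : 0 ≤ nextBid b σ i := by
  unfold nextBid
  split_ifs
  exacts [hb _, le_rfl]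

lemma RankConsistent.nextBid_le {b : Fin n → ℝ} {σ : Perm (Fin n)}
    (h : RankConsistent b σ) {i : Fin n} (hi : 0 ≤ b i) : nextBid b σ i ≤ b i := by
  unfold nextBid
  split_ifs
  · exact h _ _ (by simp [Fin.lt_def])
  · exact hi

lemma sum_Ioi_pred_sub_eq (α : Fin n → ℝ) (p : Fin n) :
    ∑ k ∈ univ.filter (fun k : Fin n => p < k),
      (α ⟨(k : ℕ) - 1, lt_of_le_of_lt (Nat.sub_le _ _) k.isLt⟩ - α k) =
      α p - α ⟨n - 1, by have := p.isLt; omega⟩ := by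
  set a : ℕ → ℝ := fun m => α ⟨min m (n - 1), by have := p.isLt; omega⟩
  have hα : ∀ k : Fin n, α k = a k := fun k => congrArg α (Fin.ext (by simp; omega))
  have hmap := sum_map (Ioi p) Fin.valEmbedding (fun m => a (m - 1) - a m)
  simp only [Fin.valEmbedding_apply] at hmap
  simp only [hα, filter_lt_eq_Ioi]
  rw [← hmap, Fin.map_valEmbedding_Ioi, ← Ico_add_one_left_eq_Ioo, sum_Ico_eq_sum_range]
  convert sum_range_sub' (fun t => a (p + t)) (n - (p + 1)) using 3 <;>
    first | rfl | (congr 1; omega)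

lemma vcgPay_nonneg {α b : Fin n → ℝ} (hα : Antitone α) (hb : ∀ k, 0 ≤ b k)
    (σ : Perm (Fin n)) (i : Fin n) : 0 ≤ vcgPay α b σ i :=
  sum_nonneg fun _ _ => mul_nonneg (hb _) (sub_nonneg.2 (hα (by simp [Fin.le_def])))

lemma RankConsistent.vcgPay_le {α b : Fin n → ℝ} {σ : Perm (Fin n)}
    (h : RankConsistent b σ) (hα : Antitone α) (hα0 : ∀ j, 0 ≤ α j) {i : Fin n}
    (hi : 0 ≤ b i) : vcgPay α b σ i ≤ α (σ i) * b i := by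
  calc vcgPay α b σ i
      ≤ ∑ k ∈ univ.filter (fun k : Fin n => σ i < k),
          b i * (α ⟨(k : ℕ) - 1, lt_of_le_of_lt (Nat.sub_le _ _) k.isLt⟩ - α k) := by
        refine sum_le_sum fun k hk => mul_le_mul_of_nonneg_right ?_ ?_
        · exact h _ _ (by simpa using hk)
        · exact sub_nonneg.2 (hα (by simp [Fin.le_def]))
    _ ≤ α (σ i) * b i := by
        rw [← mul_sum, sum_Ioi_pred_sub_eq, mul_comm]
        exact mul_le_mul_of_nonneg_right (sub_le_self _ (hα0 _)) hi

theorem deviationPrices_of_scalarEquilibrium {α v c b : Fin n → ℝ}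
    {σ : Perm (Fin n)} (util : (Fin n → ℝ) → Perm (Fin n) → Fin n → ℝ)
    (hα0 : ∀ j, 0 ≤ α j) (hb0 : ∀ i, 0 ≤ b i) (hrc : RankConsistent b σ)
    (hno : ∀ i, NoOverAt α v c i (σ i) (b i))
    (hdev : ∀ (i : Fin n) (y : ℝ) (τ : Perm (Fin n)), 0 ≤ y →
      RankConsistent (update b i y) τ → NoOverAt α v c i (τ i) y →
        util (update b i y) τ i ≤ util b σ i)
    (hutil : ∀ i, util b σ i ≤ α (σ i) * v i)
    (hutil_dev : ∀ (b' : Fin n → ℝ) (τ : Perm (Fin n)) (i : Fin n), RankConsistent b' τ →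
      0 ≤ b' i → α (τ i) * v i - α (τ i) * b' i ≤ util b' τ i) :
    DeviationPrices α v c σ (fun p => α p * b (σ.symm p)) where
  nonneg p := mul_nonneg (hα0 p) (hb0 _)
  le_occupant p := by simpa [NoOverAt] using hno (σ.symm p)
  deviation i p hp hprice := by
    obtain ⟨τ, hτ, hτi⟩ := hrc.exists_update_of_lt hp
    have hle := hdev i _ τ (hb0 _) hτ (by rwa [NoOverAt, hτi])
    have hge := hutil_dev _ τ i hτ (by simpa using hb0 _)
    simp only [hτi, update_self] at hge
    linarith [hutil i]

theorem GspEquilibrium.deviationPrices {α v c b : Fin n → ℝ} {σ : Perm (Fin n)}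
    (h : GspEquilibrium α v c b σ) (hα0 : ∀ j, 0 ≤ α j) :
    DeviationPrices α v c σ (fun p => α p * b (σ.symm p)) := by
  obtain ⟨hb0, hrc, hno, hdev⟩ := h
  refine deviationPrices_of_scalarEquilibrium (gspUtil α v) hα0 hb0 hrc hno hdev
    (fun i => ?_) (fun b' τ i hτ hi => ?_)
  · unfold gspUtil
    linarith [mul_nonneg (hα0 (σ i)) (nextBid_nonneg hb0 σ i)]
  · unfold gspUtil
    linarith [mul_le_mul_of_nonneg_left (hτ.nextBid_le hi) (hα0 (τ i))]

theorem VcgEquilibrium.deviationPrices {α v c b : Fin n → ℝ} {σ : Perm (Fin n)}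
    (h : VcgEquilibrium α v c b σ) (hα : Antitone α) (hα0 : ∀ j, 0 ≤ α j) :
    DeviationPrices α v c σ (fun p => α p * b (σ.symm p)) := by
  obtain ⟨hb0, hrc, hno, hdev⟩ := h
  refine deviationPrices_of_scalarEquilibrium (vcgUtil α v) hα0 hb0 hrc hno hdev
    (fun i => ?_) (fun b' τ i hτ hi => ?_)
  · unfold vcgUtil
    linarith [vcgPay_nonneg hα hb0 σ i]
  · unfold vcgUtil
    linarith [hτ.vcgPay_le hα hα0 hi]

lemma EgfpEquilibrium.bid_le_value {α v c : Fin n → ℝ} {b : Fin n → Fin n → ℝ}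
    {σ : Perm (Fin n)} (h : EgfpEquilibrium α v c b σ) (hα0 : ∀ j, 0 ≤ α j)
    (hv : ∀ i, 0 ≤ v i) (hc : ∀ i, 0 ≤ c i) (k : Fin n) : b k (σ k) ≤ α (σ k) * v k := by
  obtain ⟨τ, hτ⟩ := exists_egfpConsistent (update b k 0)
  have := h.2.2.2 k 0 τ (fun _ => le_rfl) hτ (hc k)
  simp only [egfpUtil, update_self, Pi.zero_apply, sub_zero] at this
  linarith [mul_nonneg (hα0 (τ k)) (hv k)]

theorem EgfpEquilibrium.deviationPrices {α v c : Fin n → ℝ} {b : Fin n → Fin n → ℝ}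
    {σ : Perm (Fin n)} (h : EgfpEquilibrium α v c b σ) (hα0 : ∀ j, 0 ≤ α j)
    (hv : ∀ i, 0 ≤ v i) (hc : ∀ i, 0 ≤ c i) :
    DeviationPrices α v c σ (fun p => b (σ.symm p) p) where
  nonneg p := h.1 _ _
  le_occupant p := by
    simpa using le_min (h.bid_le_value hα0 hv hc (σ.symm p)) (h.2.2.1 (σ.symm p))
  deviation i p hp hprice := by
    obtain ⟨hb0, hcons, -, hdev⟩ := h
    classical
    set y : Fin n → ℝ := Pi.single p (b (σ.symm p) p)
    obtain ⟨τ, hτ, hτi⟩ := hcons.exists_update_of_lt hp (y := y)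
      (fun q hq => by simpa [y, hq.ne] using hb0 _ _) (fun k hk => by simpa [y] using hcons p k hk)
    have hle := hdev i y τ (fun q => by by_cases hq : q = p <;> simp [y, hq, hb0])
      hτ (by simpa [y, hτi] using hprice.trans (min_le_right _ _))
    simp only [egfpUtil, update_self, hτi, y, Pi.single_eq_same] at hle
    linarith [hb0 i (σ i)]

end

namespace TwoPlayerGame

noncomputable def ctr (lam : ℝ) : Fin 2 → ℝ := ![1, lam⁻¹]

noncomputable def value (lam : ℝ) : Fin 2 → ℝ := ![lam, 1]

def budget : Fin 2 → ℝ := ![1, 1]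

variable {lam : ℝ}

lemma perm_eq_one_or_swap (σ : Perm (Fin 2)) : σ = 1 ∨ σ = swap 0 1 := by
  revert σ; decide

lemma ctr_antitone (hlam : 1 ≤ lam) : Antitone (ctr lam) := by
  intro p q hpq
  fin_cases p <;> fin_cases q <;> simp_all [ctr, inv_le_one_of_one_le₀ hlam]

lemma ctr_pos (hlam : 0 < lam) (p : Fin 2) : 0 < ctr lam p := by
  fin_cases p <;> simp [ctr, hlam]

lemma value_nonneg (hlam : 0 ≤ lam) (i : Fin 2) : 0 ≤ value lam i := by
  fin_cases i <;> simp [value, hlam]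

lemma budget_nonneg (i : Fin 2) : 0 ≤ budget i := by
  fin_cases i <;> simp [budget]

lemma liquidWelfare_one (hlam : 1 ≤ lam) :
    liquidWelfare (ctr lam) (value lam) budget 1 = 1 + lam⁻¹ := by
  simp [liquidWelfare, ctr, value, budget, hlam, inv_le_one_of_one_le₀ hlam]

lemma liquidWelfare_swap (hlam : 0 < lam) :
    liquidWelfare (ctr lam) (value lam) budget (swap 0 1) = 2 := by
  simp [liquidWelfare, ctr, value, budget, hlam.ne']
  norm_num

lemma eq_one_of_deviationPrices (hlam : 2 < lam) {σ : Perm (Fin 2)} {price : Fin 2 → ℝ}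
    (h : DeviationPrices (ctr lam) (value lam) budget σ price) : σ = 1 := by
  refine (perm_eq_one_or_swap σ).resolve_right fun hσ => ?_
  subst hσ
  have hprice := h.le_occupant 0
  have := h.deviation 0 0 (by decide)
    (by simpa [ctr, value, budget, show (1 : ℝ) ≤ lam by linarith] using hprice)
  simp [ctr, value, budget, (zero_lt_two.trans hlam).ne'] at this hprice
  linarith [min_le_right 1 1]

lemma gspEquilibrium (hlam : 2 < lam) :
    GspEquilibrium (ctr lam) (value lam) budget ![1, 0] 1 := by
  refine ⟨?_, ?_, ?_, ?_⟩
  · intro i; fin_cases i <;> simp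
  · intro i j hij; fin_cases i <;> fin_cases j <;> simp_all
  · intro i; fin_cases i <;> simp [NoOverAt, ctr, value, budget] <;> linarith
  · intro i y τ hy hτ hno
    rcases perm_eq_one_or_swap τ with rfl | rfl <;> fin_cases i <;>
      simp_all [gspUtil, nextBid, ctr, value, budget, RankConsistent, pull_end,
        (show lam ≠ 0 by linarith)] <;> linarith

lemma vcgEquilibrium (hlam : 2 < lam) :
    VcgEquilibrium (ctr lam) (value lam) budget ![1, 0] 1 := by
  obtain ⟨hb0, hrc, hno, -⟩ := gspEquilibrium hlam
  refine ⟨hb0, hrc, hno, fun i y τ hy hτ hno => ?_⟩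
  rcases perm_eq_one_or_swap τ with rfl | rfl <;> fin_cases i <;>
    simp only [vcgUtil, vcgPay, sum_filter, Fin.sum_univ_two] <;>
    simp_all [ctr, value, budget, RankConsistent, pull_end, (show lam ≠ 0 by linarith)]
  linarith

lemma egfpEquilibrium (hlam : 2 < lam) :
    EgfpEquilibrium (ctr lam) (value lam) budget (fun _ => ![1, 0]) 1 := by
  refine ⟨?_, ?_, ?_, fun i y τ hy hτ hbud => ?_⟩
  · intro i p; fin_cases p <;> simp
  · intro p i _; rfl
  · intro i; fin_cases i <;> simp [budget]
  rcases perm_eq_one_or_swap τ with rfl | rfl <;> fin_cases i <;>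
    simp_all [egfpUtil, EgfpConsistent, ctr, value, budget, pull_end, Fin.forall_fin_two,
      (show lam ≠ 0 by linarith)] <;> linarith [inv_pos.2 (show 0 < lam by linarith)]

theorem exists_liquidWelfare_gap {β : Type*}
    (E : (Fin 2 → ℝ) → (Fin 2 → ℝ) → (Fin 2 → ℝ) → β → Perm (Fin 2) → Prop)
    (hex : ∀ lam, 2 < lam → ∃ b σ, E (ctr lam) (value lam) budget b σ)
    (hprices : ∀ α v c b σ, Antitone α → (∀ j, 0 ≤ α j) → (∀ i, 0 ≤ v i) → (∀ i, 0 ≤ c i) →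
      E α v c b σ → ∃ price, DeviationPrices α v c σ price)
    {δ : ℝ} (hδ : 0 < δ) :
    ∃ α v c : Fin 2 → ℝ, Antitone α ∧ (∀ j, 0 < α j) ∧ (∀ i, 0 ≤ v i) ∧ (∀ i, 0 ≤ c i) ∧
      (∃ b σ, E α v c b σ) ∧ ∀ b σ, E α v c b σ →
        ∃ o : Perm (Fin 2), (2 - δ) * liquidWelfare α v c σ < liquidWelfare α v c o := by
  set lam := 2 + 2 / δ
  have hlam : 2 < lam := lt_add_of_pos_right _ (by positivity)
  have hinv : lam⁻¹ ≤ δ / 2 :=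
    inv_le_of_inv_le₀ (by positivity) (by rw [inv_div]; exact le_add_of_nonneg_left zero_le_two)
  refine ⟨ctr lam, value lam, budget, ctr_antitone (by linarith), ctr_pos (by linarith),
    value_nonneg (by linarith), budget_nonneg, hex lam hlam, fun b σ hE => ⟨swap 0 1, ?_⟩⟩
  obtain ⟨price, hprice⟩ := hprices _ _ _ b σ (ctr_antitone (by linarith))
    (fun j => (ctr_pos (by linarith) j).le) (value_nonneg (by linarith)) budget_nonneg hE
  rw [eq_one_of_deviationPrices hlam hprice, liquidWelfare_one (by linarith),
    liquidWelfare_swap (by linarith)]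
  nlinarith [mul_pos hδ (inv_pos.2 (show 0 < lam by linarith))]

end TwoPlayerGame

/-- The liquid price of anarchy and the liquid price of stability of GSP, VCG (under
the no-over assumption) and EGFP are all exactly 2.  Upper bounds: at every pure Nash
equilibrium of every position game induced by each mechanism, twice the equilibrium
liquid welfare is at least the liquid welfare of every assignment (hence at least the
optimum).  Lower bounds: for every δ > 0 there is a position game for each mechanism
that admits a pure Nash equilibrium and in which *every* pure Nash equilibrium σ has
(2 - δ) · LW(σ) below the liquid welfare of some assignment; hence both the worst-case
and the best-case equilibrium ratios approach 2. -/
theorem stmt17 :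
    -- GSP: LPoA (and hence LPoS) at most 2
    (∀ (n : ℕ) (α v c : Fin n → ℝ), Antitone α → (∀ j, 0 < α j) →
      (∀ i, 0 ≤ v i) → (∀ i, 0 ≤ c i) →
      ∀ (b : Fin n → ℝ) (σ : Equiv.Perm (Fin n)), GspEquilibrium α v c b σ →
        ∀ o : Equiv.Perm (Fin n), 2 * liquidWelfare α v c σ ≥ liquidWelfare α v c o) ∧
    -- VCG: LPoA (and hence LPoS) at most 2
    (∀ (n : ℕ) (α v c : Fin n → ℝ), Antitone α → (∀ j, 0 < α j) →
      (∀ i, 0 ≤ v i) → (∀ i, 0 ≤ c i) →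
      ∀ (b : Fin n → ℝ) (σ : Equiv.Perm (Fin n)), VcgEquilibrium α v c b σ →
        ∀ o : Equiv.Perm (Fin n), 2 * liquidWelfare α v c σ ≥ liquidWelfare α v c o) ∧
    -- EGFP: LPoA (and hence LPoS) at most 2
    (∀ (n : ℕ) (α v c : Fin n → ℝ), Antitone α → (∀ j, 0 < α j) →
      (∀ i, 0 ≤ v i) → (∀ i, 0 ≤ c i) →
      ∀ (b : Fin n → Fin n → ℝ) (σ : Equiv.Perm (Fin n)), EgfpEquilibrium α v c b σ →
        ∀ o : Equiv.Perm (Fin n), 2 * liquidWelfare α v c σ ≥ liquidWelfare α v c o) ∧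
    -- GSP: LPoS (and hence LPoA) at least 2
    (∀ δ : ℝ, 0 < δ → ∃ (n : ℕ) (α v c : Fin n → ℝ), Antitone α ∧ (∀ j, 0 < α j) ∧
      (∀ i, 0 ≤ v i) ∧ (∀ i, 0 ≤ c i) ∧
      (∃ (b : Fin n → ℝ) (σ : Equiv.Perm (Fin n)), GspEquilibrium α v c b σ) ∧
      (∀ (b : Fin n → ℝ) (σ : Equiv.Perm (Fin n)), GspEquilibrium α v c b σ →
        ∃ o : Equiv.Perm (Fin n),
          (2 - δ) * liquidWelfare α v c σ < liquidWelfare α v c o)) ∧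
    -- VCG: LPoS (and hence LPoA) at least 2
    (∀ δ : ℝ, 0 < δ → ∃ (n : ℕ) (α v c : Fin n → ℝ), Antitone α ∧ (∀ j, 0 < α j) ∧
      (∀ i, 0 ≤ v i) ∧ (∀ i, 0 ≤ c i) ∧
      (∃ (b : Fin n → ℝ) (σ : Equiv.Perm (Fin n)), VcgEquilibrium α v c b σ) ∧
      (∀ (b : Fin n → ℝ) (σ : Equiv.Perm (Fin n)), VcgEquilibrium α v c b σ →
        ∃ o : Equiv.Perm (Fin n),
          (2 - δ) * liquidWelfare α v c σ < liquidWelfare α v c o)) ∧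
    -- EGFP: LPoS (and hence LPoA) at least 2
    (∀ δ : ℝ, 0 < δ → ∃ (n : ℕ) (α v c : Fin n → ℝ), Antitone α ∧ (∀ j, 0 < α j) ∧
      (∀ i, 0 ≤ v i) ∧ (∀ i, 0 ≤ c i) ∧
      (∃ (b : Fin n → Fin n → ℝ) (σ : Equiv.Perm (Fin n)), EgfpEquilibrium α v c b σ) ∧
      (∀ (b : Fin n → Fin n → ℝ) (σ : Equiv.Perm (Fin n)), EgfpEquilibrium α v c b σ →
        ∃ o : Equiv.Perm (Fin n),
          (2 - δ) * liquidWelfare α v c σ < liquidWelfare α v c o)) := by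
  refine ⟨fun n α v c hα hpos hv hc b σ h o => ?_, fun n α v c hα hpos hv hc b σ h o => ?_,
    fun n α v c hα hpos hv hc b σ h o => ?_, fun δ hδ => ⟨2, ?_⟩, fun δ hδ => ⟨2, ?_⟩,
    fun δ hδ => ⟨2, ?_⟩⟩
  · have hα0 j := (hpos j).le
    exact (h.deviationPrices hα0).liquidWelfare_le_two_mul hα hα0 hv hc o
  · have hα0 j := (hpos j).le
    exact (h.deviationPrices hα hα0).liquidWelfare_le_two_mul hα hα0 hv hc o
  · have hα0 j := (hpos j).le
    exact (h.deviationPrices hα0 hv hc).liquidWelfare_le_two_mul hα hα0 hv hc o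
  · exact TwoPlayerGame.exists_liquidWelfare_gap (fun α v c b σ => GspEquilibrium α v c b σ)
      (fun _ hlam => ⟨_, _, TwoPlayerGame.gspEquilibrium hlam⟩)
      (fun _ _ _ _ _ _ hα0 _ _ h => ⟨_, h.deviationPrices hα0⟩) hδ
  · exact TwoPlayerGame.exists_liquidWelfare_gap (fun α v c b σ => VcgEquilibrium α v c b σ)
      (fun _ hlam => ⟨_, _, TwoPlayerGame.vcgEquilibrium hlam⟩)
      (fun _ _ _ _ _ hα hα0 _ _ h => ⟨_, h.deviationPrices hα hα0⟩) hδ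
  · exact TwoPlayerGame.exists_liquidWelfare_gap (fun α v c b σ => EgfpEquilibrium α v c b σ)
      (fun _ hlam => ⟨_, _, TwoPlayerGame.egfpEquilibrium hlam⟩)
      (fun _ _ _ _ _ _ hα0 hv hc h => ⟨_, h.deviationPrices hα0 hv hc⟩) hδ
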